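/- arXiv:2110.06774 — 4 statements merged into one kernel-verified Lean document; each statement's English description precedes it below -/
import Mathlib

section
/- For integers n ≥ 2 and l ≥ 1, the number of permutations σ ∈ S_n with σ(1)=1 having exactly 2l alternating runs in the cyclic sense (i.e., there exist indices 1=t_1<t_2<···<t_{2l} ≤ n such that σ increases on each interval [t_{2u-1}, t_{2u}] and decreases on each interval [t_{2u}, t_{2u+1}], cyclically with t_{2l+1}=t_1) is at most (2l)^(n-1). -/
/-!
Label every value by the index of the run of `σ` containing it. Along the positions, the key
(run index, ± value), with `+` on the ascending (even-indexed) runs and `-` on the descending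
ones, is strictly increasing. Since this key is a function of the value and its label alone,
`σ⁻¹` is the unique increasing enumeration of the values by that key, so the labels determine
`σ`. The value `σ 0 = 0` always lies in run `0`, which leaves `(2l)^(n-1)` possible labellings.
-/

open Function

theorem Equiv.eq_of_strictMono_comp {ι α β : Type*} [LinearOrder ι] [WellFoundedLT ι]
    [Preorder β] {K : α → β} (hK : Injective K) {σ τ : ι ≃ α}
    (hσ : StrictMono (K ∘ σ)) (hτ : StrictMono (K ∘ τ)) : σ = τ := by
  have hrange : Set.range (K ∘ σ) = Set.range (K ∘ τ) := by
    rw [Set.range_comp, Set.range_comp, σ.range_eq_univ, τ.range_eq_univ]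
  have hcomp : K ∘ σ = K ∘ τ := (hσ.range_inj hτ).1 hrange
  exact Equiv.ext fun p => hK (congrFun hcomp p)

def runKey (k x : ℕ) : ℕ ×ₗ ℤ := toLex (k, if Even k then (x : ℤ) else -x)

lemma runKey_lt_runKey_of_lt {k k' : ℕ} (h : k < k') (x y : ℕ) : runKey k x < runKey k' y :=
  Prod.Lex.toLex_lt_toLex.2 (Or.inl h)

lemma runKey_lt_runKey_iff {k x y : ℕ} :
    runKey k x < runKey k y ↔ if Even k then x < y else y < x := by
  simp only [runKey, Prod.Lex.toLex_lt_toLex, lt_irrefl, false_or, true_and]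
  split_ifs <;> omega

lemma runKey_inj {k k' x y : ℕ} : runKey k x = runKey k' y ↔ k = k' ∧ x = y := by
  simp only [runKey, toLex_inj, Prod.mk.injEq]
  constructor
  · rintro ⟨rfl, h⟩
    exact ⟨rfl, by split_ifs at h <;> omega⟩
  · rintro ⟨rfl, rfl⟩
    exact ⟨rfl, rfl⟩

lemma Equiv.Perm.eq_of_strictMono_runKey {n : ℕ} {σ τ : Equiv.Perm (Fin n)}
    {r r' : Fin n → ℕ} (hσ : StrictMono fun p => runKey (r p) (σ p))
    (hτ : StrictMono fun p => runKey (r' p) (τ p))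
    (h : ∀ v, r (σ.symm v) = r' (τ.symm v)) : σ = τ := by
  have hK : Injective fun v : Fin n => runKey (r (σ.symm v)) v := fun v w hvw =>
    Fin.ext (runKey_inj.1 hvw).2
  refine Equiv.eq_of_strictMono_comp hK ?_ ?_
  · simpa [comp_def] using hσ
  · simpa [comp_def, h] using hτ

lemma Fin.strictMono_of_lt_add_one {n : ℕ} {β : Type*} [Preorder β] {f : Fin n → β}
    (hf : ∀ (i : ℕ) (hi : i + 1 < n), f ⟨i, by omega⟩ < f ⟨i + 1, hi⟩) :
    StrictMono f := by
  cases n with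
  | zero => exact fun i => i.elim0
  | succ m => exact Fin.strictMono_iff_lt_succ.2 fun i => hf i (by omega)

def runIndex (t : ℕ → ℕ) (l p : ℕ) : ℕ :=
  Nat.findGreatest (fun j => t j ≤ p) (2 * l - 1)

section runIndex

variable {n l : ℕ} {t : ℕ → ℕ}

lemma runIndex_lt (hl : 1 ≤ l) (p : ℕ) : runIndex t l p < 2 * l :=
  (Nat.findGreatest_le _).trans_lt (by omega)

lemma runIndex_mono : Monotone (runIndex t l) :=
  fun _ _ hpq => Nat.findGreatest_mono (fun _ hj => hj.trans hpq) le_rfl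

lemma start_runIndex_le (ht0 : t 0 = 0) (p : ℕ) : t (runIndex t l p) ≤ p :=
  Nat.findGreatest_spec (P := fun j => t j ≤ p) (Nat.zero_le _) (by omega)

lemma lt_start_runIndex_add_one {p : ℕ} (h : runIndex t l p + 1 < 2 * l) :
    p < t (runIndex t l p + 1) :=
  not_le.1 fun hle => Nat.findGreatest_is_greatest (P := fun j => t j ≤ p)
    (Nat.lt_succ_self _) (Nat.le_sub_one_of_lt h) hle

lemma runIndex_zero (ht0 : t 0 = 0) (ht : ∀ a b : ℕ, a < b → b < 2 * l → t a < t b) :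
    runIndex t l 0 = 0 :=
  Nat.findGreatest_eq_zero_iff.2 fun j hj hjl => by
    have := ht 0 j hj (by omega)
    omega

lemma strictMono_runKey_runIndex {σ : Equiv.Perm (Fin n)} (hl : 1 ≤ l) (ht0 : t 0 = 0)
    (hinc : ∀ u < l, ∀ i, t (2 * u) ≤ i → i < t (2 * u + 1) → ∀ h : i < n - 1,
      σ ⟨i, by omega⟩ < σ ⟨i + 1, by omega⟩)
    (hdec : ∀ u < l, ∀ i, t (2 * u + 1) ≤ i →
      i < (if u + 1 < l then t (2 * u + 2) else n - 1) → ∀ h : i < n - 1,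
      σ ⟨i + 1, by omega⟩ < σ ⟨i, by omega⟩) :
    StrictMono fun p : Fin n => runKey (runIndex t l p) (σ p) := by
  refine Fin.strictMono_of_lt_add_one fun i hi => ?_
  rcases (runIndex_mono (t := t) (l := l) i.le_succ).lt_or_eq with hlt | heq
  · exact runKey_lt_runKey_of_lt hlt _ _
  rw [← heq, runKey_lt_runKey_iff]
  have hstart := start_runIndex_le (l := l) ht0 i
  have hnext := lt_start_runIndex_add_one (t := t) (l := l) (p := i)
  have hk := runIndex_lt (t := t) hl i
  rcases Nat.even_or_odd' (runIndex t l i) with ⟨u, hu | hu⟩ <;> rw [hu] at hstart hnext hk ⊢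
  · rw [if_pos (even_two_mul u)]
    exact hinc u (by omega) i hstart (hnext (by omega)) (by omega)
  · rw [if_neg (Nat.not_even_iff_odd.2 (odd_two_mul_add_one u))]
    refine hdec u (by omega) i hstart ?_ (by omega)
    split_ifs with hul
    · exact hnext (by omega)
    · omega

end runIndex

/-- For n ≥ 2 and l ≥ 1, the number of permutations σ ∈ S_n with σ(1)=1
having 2l alternating runs in the cyclic sense (indices 1=t_1<t_2<···<t_{2l}≤n such
that σ increases on each [t_{2u-1},t_{2u}] and decreases on each [t_{2u},t_{2u+1}],
cyclically) is at most (2l)^(n-1).  (0-indexed formulation: t 0 = 0, and the final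
decreasing run goes from t(2l-1) to position n-1.) -/
theorem stmt2 (n l : ℕ) (hn : 2 ≤ n) (hl : 1 ≤ l) :
    Nat.card {σ : Equiv.Perm (Fin n) //
      σ ⟨0, by omega⟩ = ⟨0, by omega⟩ ∧
      ∃ t : ℕ → ℕ, t 0 = 0 ∧
        (∀ a b : ℕ, a < b → b < 2 * l → t a < t b) ∧
        (∀ a : ℕ, a < 2 * l → t a ≤ n - 1) ∧
        (∀ u : ℕ, ∀ hu : u < l, ∀ i : ℕ, ∀ h1 : t (2 * u) ≤ i, ∀ h2 : i < t (2 * u + 1),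
          ∀ h3 : i < n - 1, σ ⟨i, by omega⟩ < σ ⟨i + 1, by omega⟩) ∧
        (∀ u : ℕ, ∀ hu : u < l, ∀ i : ℕ, ∀ h1 : t (2 * u + 1) ≤ i,
          ∀ h2 : i < (if u + 1 < l then t (2 * u + 2) else n - 1),
          ∀ h3 : i < n - 1, σ ⟨i + 1, by omega⟩ < σ ⟨i, by omega⟩)}
    ≤ (2 * l) ^ (n - 1) := by
  refine le_of_le_of_eq (Nat.card_le_card_of_injective
    (fun x (v : Fin (n - 1)) => (⟨runIndex x.2.2.choose l (x.1.symm ⟨v + 1, by omega⟩),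
      runIndex_lt hl _⟩ : Fin (2 * l))) fun x y hxy => ?_) (by simp)
  obtain ⟨hx0, hxmono, -, hxinc, hxdec⟩ := x.2.2.choose_spec
  obtain ⟨hy0, hymono, -, hyinc, hydec⟩ := y.2.2.choose_spec
  refine Subtype.ext <| Equiv.Perm.eq_of_strictMono_runKey
    (strictMono_runKey_runIndex hl hx0 hxinc hxdec)
    (strictMono_runKey_runIndex hl hy0 hyinc hydec) fun v => ?_
  rcases v with ⟨_ | j, hj⟩
  · rw [(Equiv.symm_apply_eq _).2 x.2.1.symm, (Equiv.symm_apply_eq _).2 y.2.1.symm]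
    exact (runIndex_zero hx0 hxmono).trans (runIndex_zero hy0 hymono).symm
  · exact congrArg Fin.val (congrFun hxy ⟨j, by omega⟩)
end

section
/- For each permutation σ ∈ S_n, the expansion of the rational function P(σ; λ_1,...,λ_n) = Π_{q=1}^n 1/(λ_{σ(q)} - λ_{σ(q+1)}) (with σ(n+1):=σ(1)) as a Laurent series in the region |λ_1| > ··· > |λ_n| is given by P(σ;λ_1,...,λ_n) = (-1)^{m(σ)} Σ_{j_1,...,j_n ≥ 0} Π_{q=1}^n λ_{σ(q)}^{J_{σ,q}(j_q) - J_{σ,q-1}(j_{q-1}) - 1}, where m(σ) is the number of cyclic descents of σ. -/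
/-!
Each factor `(λ_{σ q} - λ_{σ (q+1)})⁻¹` is a geometric series in the ratio of the smaller to the
larger of the two values; written as `λ_{σ q} ^ J * λ_{σ (q+1)} ^ (-J - 1)` with `J = Jfun σ q j`,
it carries the sign `-1` exactly at the cyclic descents. A finite product of absolutely convergent
series is the sum over all tuples of indices, and shifting `q ↦ q + 1` in the factors
`λ_{σ (q+1)} ^ (-J - 1)` collects the exponents of each `λ_{σ q}`.
-/

open scoped BigOperators

def cycDesc {n : ℕ} [NeZero n] (σ : Equiv.Perm (Fin n)) : ℕ :=
  (Finset.univ.filter fun q : Fin n => σ (q + 1) < σ q).card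

def Jfun {n : ℕ} [NeZero n] (σ : Equiv.Perm (Fin n)) (q : Fin n) (j : ℕ) : ℤ :=
  if σ q < σ (q + 1) then -(j : ℤ) - 1 else (j : ℤ)

theorem zpow_neg_natCast_sub_one {K : Type*} [DivisionRing K] (x : K) (j : ℕ) :
    x ^ (-(j : ℤ) - 1) = (x ^ (j + 1))⁻¹ := by
  rw [← zpow_natCast, ← zpow_neg]
  push_cast
  ring_nf

section Geometric

variable {K : Type*} [NormedField K] {a b : K}

theorem hasSum_inv_sub_geometric (h : ‖b‖ < ‖a‖) :
    HasSum (fun j : ℕ => b ^ j / a ^ (j + 1)) (a - b)⁻¹ := by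
  have ha : a ≠ 0 := norm_pos_iff.mp ((norm_nonneg b).trans_lt h)
  have hr : ‖b / a‖ < 1 := by rwa [norm_div, div_lt_one (norm_pos_iff.mpr ha)]
  have hterm : (fun j : ℕ => b ^ j / a ^ (j + 1)) = fun j => (b / a) ^ j * a⁻¹ := by
    ext j
    rw [div_pow, pow_succ, div_mul_eq_div_div, div_eq_mul_inv]
  have hsum : (a - b)⁻¹ = (1 - b / a)⁻¹ * a⁻¹ := by
    rw [← mul_inv, sub_mul, one_mul, div_mul_cancel₀ b ha]
  rw [hterm, hsum]
  exact (hasSum_geometric_of_norm_lt_one hr).mul_right a⁻¹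

theorem summable_norm_geometric_div (h : ‖b‖ < ‖a‖) :
    Summable fun j : ℕ => ‖b ^ j / a ^ (j + 1)‖ := by
  have ha : 0 < ‖a‖ := (norm_nonneg b).trans_lt h
  have hr : ‖b‖ / ‖a‖ < 1 := by rwa [div_lt_one ha]
  refine ((summable_geometric_of_lt_one (by positivity) hr).mul_right ‖a‖⁻¹).congr fun j => ?_
  rw [norm_div, norm_pow, norm_pow, div_pow, pow_succ]
  field_simp

end Geometric

section FiniteProduct

variable {κ R : Type*} [NormedCommRing R]

theorem comp_consEquiv_prod {n : ℕ} (f : Fin (n + 1) → κ → R) :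
    (fun g : Fin (n + 1) → κ => ∏ i, f i (g i)) ∘ Fin.consEquiv (fun _ => κ)
      = fun p => f 0 p.1 * ∏ i : Fin n, f i.succ (p.2 i) := by
  ext p
  simp [Fin.consEquiv, Fin.prod_univ_succ]

theorem summable_norm_prod_pi {n : ℕ} {f : Fin n → κ → R} (hf : ∀ i, Summable fun j => ‖f i j‖) :
    Summable fun g : Fin n → κ => ‖∏ i, f i (g i)‖ := by
  induction n with
  | zero => exact Summable.of_finite
  | succ n ih =>
    rw [← (Fin.consEquiv fun _ => κ).summable_iff]
    change Summable ((‖·‖) ∘ ((fun g : Fin (n + 1) → κ => ∏ i, f i (g i)) ∘ Fin.consEquiv _))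
    rw [comp_consEquiv_prod]
    exact ((hf 0).mul_norm (ih fun i => hf i.succ) :)

theorem hasSum_prod_pi [CompleteSpace R] {n : ℕ} {f : Fin n → κ → R} {s : Fin n → R}
    (hf : ∀ i, HasSum (f i) (s i)) (hf' : ∀ i, Summable fun j => ‖f i j‖) :
    HasSum (fun g : Fin n → κ => ∏ i, f i (g i)) (∏ i, s i) := by
  induction n with
  | zero =>
    rw [Fin.prod_univ_zero]
    convert hasSum_unique fun g : Fin 0 → κ => ∏ i, f i (g i)
    exact (Fin.prod_univ_zero _).symm
  | succ n ih =>
    rw [← (Fin.consEquiv fun _ => κ).hasSum_iff, comp_consEquiv_prod, Fin.prod_univ_succ]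
    have hsum := summable_mul_of_summable_norm (hf' 0) (summable_norm_prod_pi fun i => hf' i.succ)
    exact ((hf 0).mul (ih (fun i => hf i.succ) fun i => hf' i.succ) hsum :)

end FiniteProduct

section CyclicProduct

variable {G : Type*} [CommGroupWithZero G] {n : ℕ} [NeZero n]

theorem prod_zpow_mul_zpow_succ {x : Fin n → G} (hx : ∀ q, x q ≠ 0) (a b : Fin n → ℤ) :
    ∏ q, x q ^ a q * x (q + 1) ^ b q = ∏ q, x q ^ (a q + b (q - 1)) := by
  have hshift : ∏ q, x (q + 1) ^ b q = ∏ q, x q ^ b (q - 1) := by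
    rw [← Equiv.prod_comp (Equiv.addRight (1 : Fin n)) (fun q => x q ^ b (q - 1))]
    simp only [Equiv.coe_addRight, add_sub_cancel_right]
  rw [Finset.prod_mul_distrib, hshift, ← Finset.prod_mul_distrib]
  exact Finset.prod_congr rfl fun q _ => (zpow_add₀ (hx q) _ _).symm

end CyclicProduct

theorem prod_ite_descent_eq_neg_one_pow_cycDesc {R : Type*} [CommRing R] {n : ℕ} [NeZero n]
    (σ : Equiv.Perm (Fin n)) :
    ∏ q, (if σ (q + 1) < σ q then (-1 : R) else 1) = (-1) ^ cycDesc σ := by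
  rw [Finset.prod_ite, Finset.prod_const_one, mul_one, Finset.prod_const]
  rfl

section Laurent

variable {K : Type*} [NormedField K] {n : ℕ} [NeZero n] (σ : Equiv.Perm (Fin n)) (lam : Fin n → K)

def laurentTerm (q : Fin n) (j : ℕ) : K :=
  lam (σ q) ^ Jfun σ q j * lam (σ (q + 1)) ^ (-Jfun σ q j - 1)

variable {σ} {q : Fin n}

theorem laurentTerm_of_lt (h : σ q < σ (q + 1)) :
    laurentTerm σ lam q = fun j => lam (σ (q + 1)) ^ j / lam (σ q) ^ (j + 1) := by
  ext j
  rw [laurentTerm, Jfun, if_pos h, show -(-(j : ℤ) - 1) - 1 = j by ring, zpow_natCast,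
    zpow_neg_natCast_sub_one, div_eq_mul_inv, mul_comm]

theorem laurentTerm_of_gt (h : σ (q + 1) < σ q) :
    laurentTerm σ lam q = fun j => lam (σ q) ^ j / lam (σ (q + 1)) ^ (j + 1) := by
  ext j
  rw [laurentTerm, Jfun, if_neg h.not_gt, zpow_natCast, zpow_neg_natCast_sub_one, div_eq_mul_inv]

theorem summable_norm_laurentTerm (hord : ∀ i j : Fin n, i < j → ‖lam j‖ < ‖lam i‖)
    (hq : σ q ≠ σ (q + 1)) :
    Summable fun j => ‖laurentTerm σ lam q j‖ := by
  rcases hq.lt_or_gt with h | h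
  · rw [laurentTerm_of_lt lam h]
    exact summable_norm_geometric_div (hord _ _ h)
  · rw [laurentTerm_of_gt lam h]
    exact summable_norm_geometric_div (hord _ _ h)

theorem hasSum_laurentTerm (hord : ∀ i j : Fin n, i < j → ‖lam j‖ < ‖lam i‖)
    (hq : σ q ≠ σ (q + 1)) :
    HasSum (laurentTerm σ lam q)
      ((if σ (q + 1) < σ q then -1 else 1) * (lam (σ q) - lam (σ (q + 1)))⁻¹) := by
  rcases hq.lt_or_gt with h | h
  · rw [laurentTerm_of_lt lam h, if_neg h.not_gt, one_mul]
    exact hasSum_inv_sub_geometric (hord _ _ h)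
  · rw [laurentTerm_of_gt lam h, if_pos h, neg_one_mul, ← inv_neg, neg_sub]
    exact hasSum_inv_sub_geometric (hord _ _ h)

theorem prod_laurentTerm (h0 : ∀ i, lam i ≠ 0) (g : Fin n → ℕ) :
    ∏ q, laurentTerm σ lam q (g q)
      = ∏ q, lam (σ q) ^ (Jfun σ q (g q) - Jfun σ (q - 1) (g (q - 1)) - 1) := by
  simp only [laurentTerm]
  rw [prod_zpow_mul_zpow_succ (x := fun q => lam (σ q)) fun q => h0 (σ q)]
  exact Finset.prod_congr rfl fun q _ => by ring_nf

end Laurent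

theorem laurent_expansion_fin_one {K : Type*} [NormedField K] (σ : Equiv.Perm (Fin 1))
    (lam : Fin 1 → K) :
    ∏ q : Fin 1, (lam (σ q) - lam (σ (q + 1)))⁻¹
      = (-1) ^ cycDesc σ *
        ∑' j : Fin 1 → ℕ, ∏ q : Fin 1,
          lam (σ q) ^ (Jfun σ q (j q) - Jfun σ (q - 1) (j (q - 1)) - 1) := by
  -- both sides are junk zeros: `0⁻¹ = 0` on the left, and on the right `∑'` of a constant
  -- over the infinite type `Fin 1 → ℕ` is `0`
  simp [tsum_const]

/-- for σ ∈ S_n, in the region |λ_1| > ⋯ > |λ_n| (all nonzero), the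
Laurent expansion of P(σ;λ) = ∏_q 1/(λ_{σ(q)} - λ_{σ(q+1)}) (cyclic indices) is
P(σ;λ) = (-1)^{m(σ)} Σ_{j_1,…,j_n ≥ 0} ∏_q λ_{σ(q)}^{J_{σ,q}(j_q) - J_{σ,q-1}(j_{q-1}) - 1}. -/
theorem stmt4 (n : ℕ) [NeZero n] (σ : Equiv.Perm (Fin n)) (lam : Fin n → ℂ)
    (h0 : ∀ i, lam i ≠ 0)
    (hord : ∀ i j : Fin n, i < j → ‖lam j‖ < ‖lam i‖) :
    ∏ q : Fin n, (lam (σ q) - lam (σ (q + 1)))⁻¹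
      = (-1) ^ cycDesc σ *
        ∑' j : Fin n → ℕ, ∏ q : Fin n,
          lam (σ q) ^ (Jfun σ q (j q) - Jfun σ (q - 1) (j (q - 1)) - 1) := by
  obtain rfl | hn := eq_or_ne n 1
  · exact laurent_expansion_fin_one σ lam
  have hq (q : Fin n) : σ q ≠ σ (q + 1) := by
    refine σ.injective.ne ?_
    rwa [Ne, eq_comm, add_eq_left, Fin.one_eq_zero_iff]
  have hsum := hasSum_prod_pi (fun q => hasSum_laurentTerm lam hord (hq q))
    fun q => summable_norm_laurentTerm lam hord (hq q)
  rw [Finset.prod_mul_distrib, prod_ite_descent_eq_neg_one_pow_cycDesc] at hsum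
  simp only [prod_laurentTerm lam h0] at hsum
  rw [hsum.tsum_eq, ← mul_assoc, ← mul_pow, neg_one_mul, neg_neg, one_pow, one_mul]
end

section
/- Define b_k for integers k ≥ -1 by: b_{3g} = -(6g-1)!!/(24^g g!), b_{3g-1} = ((6g+1)/(6g-1))·(6g-1)!!/(24^g g!), b_{3g-2} = (1/2)·(6g-5)!!/(24^{g-1}(g-1)!). Then the sequence (|b_{k+3}/b_k|)_{k≥0} is strictly increasing in k, i.e., |b_{k+4}/b_{k+1}| > |b_{k+3}/b_k| for all k ≥ 0. -/
/-- The sequence b_k (k ≥ -1) from the paper: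
b_{3g} = -(6g-1)!!/(24^g g!), b_{3g-1} = ((6g+1)/(6g-1))·(6g-1)!!/(24^g g!),
b_{3g-2} = (1/2)·(6g-5)!!/(24^{g-1} (g-1)!), with (-1)!! = 1. -/
def bInt (k : ℤ) : ℚ :=
  if k % 3 = 0 then
    -((6 * (k / 3) - 1).toNat.doubleFactorial : ℚ)
      / (24 ^ (k / 3).toNat * ((k / 3).toNat.factorial : ℚ))
  else if k % 3 = 2 then
    ((6 * (((k + 1) / 3 : ℤ) : ℚ) + 1) / (6 * (((k + 1) / 3 : ℤ) : ℚ) - 1)) *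
      (((6 * ((k + 1) / 3) - 1).toNat.doubleFactorial : ℚ)
        / (24 ^ ((k + 1) / 3).toNat * (((k + 1) / 3).toNat.factorial : ℚ)))
  else
    (1 / 2 : ℚ) * (((6 * ((k + 2) / 3) - 5).toNat.doubleFactorial : ℚ)
      / (24 ^ ((k + 2) / 3 - 1).toNat * (((k + 2) / 3 - 1).toNat.factorial : ℚ)))


private theorem dfB (g : ℕ) :
    (6*g+1).doubleFactorial = (6*g+1) * (6*g-1).doubleFactorial := by
  cases g with
  | zero => decide
  | succ n =>
    have e : 6*(n+1)+1 = (6*n+5)+2 := by omega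
    have e2 : 6*(n+1)-1 = 6*n+5 := by omega
    rw [e, e2, Nat.doubleFactorial_add_two]

private theorem dfA (g : ℕ) : (6*g+5).doubleFactorial
    = (6*g+5) * ((6*g+3) * (6*g+1).doubleFactorial) := by
  have e : 6*g+5 = (6*g+1)+2+2 := by omega
  rw [e, Nat.doubleFactorial_add_two, Nat.doubleFactorial_add_two]

private theorem dfC (g : ℕ) : (6*g+7).doubleFactorial
    = (6*g+7) * ((6*g+5) * ((6*g+3) * (6*g+1).doubleFactorial)) := by
  have e : 6*g+7 = (6*g+1)+2+2+2 := by omega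
  rw [e, Nat.doubleFactorial_add_two, Nat.doubleFactorial_add_two,
    Nat.doubleFactorial_add_two]

private theorem dfD (g : ℕ) : (6*g+11).doubleFactorial
    = (6*g+11) * ((6*g+9) * ((6*g+7) * (6*g+5).doubleFactorial)) := by
  have e : 6*g+11 = (6*g+5)+2+2+2 := by omega
  rw [e, Nat.doubleFactorial_add_two, Nat.doubleFactorial_add_two,
    Nat.doubleFactorial_add_two]

private theorem bInt_3g (g : ℕ) : bInt (3 * g) =
    -((6 * g - 1).doubleFactorial : ℚ) / (24 ^ g * (g.factorial : ℚ)) := by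
  have h1 : (3 * (g:ℤ)) / 3 = g := by omega
  have h2 : ((6 * (g:ℤ) - 1)).toNat = 6 * g - 1 := by omega
  have h3 : ((g:ℤ)).toNat = g := by omega
  rw [bInt, if_pos (by omega : (3 * (g:ℤ)) % 3 = 0), h1, h2, h3]

private theorem bInt_3g1 (g : ℕ) : bInt (3 * g + 1) =
    (1/2 : ℚ) * ((6 * g + 1).doubleFactorial : ℚ) / (24 ^ g * (g.factorial : ℚ)) := by
  have h1 : (3 * (g:ℤ) + 1 + 2) / 3 = g + 1 := by omega
  have h2 : (6 * ((g:ℤ) + 1) - 5).toNat = 6 * g + 1 := by omega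
  have h3 : ((g:ℤ) + 1 - 1).toNat = g := by omega
  rw [bInt, if_neg (by omega : ¬ (3 * (g:ℤ) + 1) % 3 = 0),
    if_neg (by omega : ¬ (3 * (g:ℤ) + 1) % 3 = 2), h1, h2, h3]
  ring

private theorem bInt_3g2 (g : ℕ) : bInt (3 * g + 2) =
    ((6 * (g:ℚ) + 7) / (6 * (g:ℚ) + 5)) *
      (((6 * g + 5).doubleFactorial : ℚ) / (24 ^ (g+1) * ((g+1).factorial : ℚ))) := by
  have h1 : (3 * (g:ℤ) + 2 + 1) / 3 = g + 1 := by omega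
  have h2 : (6 * ((g:ℤ) + 1) - 1).toNat = 6 * g + 5 := by omega
  have h3 : ((g:ℤ) + 1).toNat = g + 1 := by omega
  rw [bInt, if_neg (by omega : ¬ (3 * (g:ℤ) + 2) % 3 = 0),
    if_pos (by omega : (3 * (g:ℤ) + 2) % 3 = 2), h1, h2, h3]
  push_cast
  ring

private theorem rA (g : ℕ) : |bInt (3*(g:ℤ)+3) / bInt (3*(g:ℤ))| =
    ((6*(g:ℚ)+1)*(6*(g:ℚ)+3)*(6*(g:ℚ)+5)) / (24*((g:ℚ)+1)) := by
  have h1 : 3*(g:ℤ)+3 = 3*((g+1:ℕ):ℤ) := by push_cast; ring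
  rw [h1, bInt_3g (g+1), bInt_3g g, (by omega : 6*(g+1)-1 = 6*g+5)]
  have hdf : ((6*g+5).doubleFactorial : ℚ)
      = (6*(g:ℚ)+5)*((6*(g:ℚ)+3)*((6*(g:ℚ)+1)*((6*g-1).doubleFactorial : ℚ))) := by
    rw [dfA g, dfB g]; push_cast; ring
  have hd : (0:ℚ) < ((6*g-1).doubleFactorial : ℚ) := by
    exact_mod_cast Nat.doubleFactorial_pos _
  have hf : (0:ℚ) < (g.factorial : ℚ) := by exact_mod_cast g.factorial_pos
  have h24 : ((24:ℚ))^g ≠ 0 := by positivity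
  have hg1 : ((g:ℚ)+1) ≠ 0 := by positivity
  have hfac : (((g+1).factorial : ℕ) : ℚ) = ((g:ℚ)+1) * g.factorial := by
    rw [Nat.factorial_succ]; push_cast; ring
  rw [hdf, hfac, pow_succ, abs_eq (by positivity)]
  left
  field_simp [hd.ne', hf.ne']

private theorem rB (g : ℕ) : |bInt (3*(g:ℤ)+4) / bInt (3*(g:ℤ)+1)| =
    ((6*(g:ℚ)+3)*(6*(g:ℚ)+5)*(6*(g:ℚ)+7)) / (24*((g:ℚ)+1)) := by
  have h1 : 3*(g:ℤ)+4 = 3*((g+1:ℕ):ℤ)+1 := by push_cast; ring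
  rw [h1, bInt_3g1 (g+1), bInt_3g1 g, (by omega : 6*(g+1)+1 = 6*g+7)]
  have hdf : ((6*g+7).doubleFactorial : ℚ)
      = (6*(g:ℚ)+7)*((6*(g:ℚ)+5)*((6*(g:ℚ)+3)*((6*g+1).doubleFactorial : ℚ))) := by
    rw [dfC g]; push_cast; ring
  have hd : (0:ℚ) < ((6*g+1).doubleFactorial : ℚ) := by
    exact_mod_cast Nat.doubleFactorial_pos _
  have hf : (0:ℚ) < (g.factorial : ℚ) := by exact_mod_cast g.factorial_pos
  have h24 : ((24:ℚ))^g ≠ 0 := by positivity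
  have hg1 : ((g:ℚ)+1) ≠ 0 := by positivity
  have hfac : (((g+1).factorial : ℕ) : ℚ) = ((g:ℚ)+1) * g.factorial := by
    rw [Nat.factorial_succ]; push_cast; ring
  rw [hdf, hfac, pow_succ, abs_eq (by positivity)]
  left
  field_simp [hd.ne', hf.ne']

private theorem rC (g : ℕ) : |bInt (3*(g:ℤ)+5) / bInt (3*(g:ℤ)+2)| =
    ((6*(g:ℚ)+5)*(6*(g:ℚ)+9)*(6*(g:ℚ)+13)) / (24*((g:ℚ)+2)) := by
  have h1 : 3*(g:ℤ)+5 = 3*((g:ℤ)+1)+2 := by ring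
  have h5 := bInt_3g2 (g+1)
  rw [(by omega : 6*(g+1)+5 = 6*g+11), (by omega : g+1+1 = g+2)] at h5
  push_cast at h5
  rw [h1, h5, bInt_3g2 g]
  have hdf : ((6*g+11).doubleFactorial : ℚ)
      = (6*(g:ℚ)+11)*((6*(g:ℚ)+9)*((6*(g:ℚ)+7)*((6*g+5).doubleFactorial : ℚ))) := by
    rw [dfD g]; push_cast; ring
  have hd : (0:ℚ) < ((6*g+5).doubleFactorial : ℚ) := by
    exact_mod_cast Nat.doubleFactorial_pos _
  have hf : (0:ℚ) < ((g+1).factorial : ℚ) := by exact_mod_cast (g+1).factorial_pos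
  have h24 : ((24:ℚ))^(g+1) ≠ 0 := by positivity
  have hg1 : ((g:ℚ)+2) ≠ 0 := by positivity
  have hg5 : (6*(g:ℚ)+5) ≠ 0 := by positivity
  have hg7 : (6*(g:ℚ)+7) ≠ 0 := by positivity
  have hg11 : (6*(g:ℚ)+11) ≠ 0 := by positivity
  have hfac : (((g+2).factorial : ℕ) : ℚ) = ((g:ℚ)+2) * (g+1).factorial := by
    rw [(by omega : g+2 = (g+1)+1), Nat.factorial_succ]; push_cast; ring
  rw [hdf, hfac, pow_succ, abs_eq (by positivity)]
  left
  field_simp [hd.ne', hf.ne']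
  ring

/-- the sequence (|b_{k+3}/b_k|)_{k≥0} is strictly increasing:
|b_{k+4}/b_{k+1}| > |b_{k+3}/b_k| for all k ≥ 0. -/
theorem stmt6 (k : ℤ) (hk : 0 ≤ k) :
    |bInt (k + 3) / bInt k| < |bInt (k + 4) / bInt (k + 1)| := by
  lift k to ℕ using hk with n
  obtain ⟨g, rfl | rfl | rfl⟩ : ∃ g, n = 3*g ∨ n = 3*g+1 ∨ n = 3*g+2 := ⟨n/3, by omega⟩
  · rw [show ((3*g:ℕ):ℤ)+3 = 3*(g:ℤ)+3 by push_cast; ring,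
      show ((3*g:ℕ):ℤ)+4 = 3*(g:ℤ)+4 by push_cast; ring,
      show ((3*g:ℕ):ℤ)+1 = 3*(g:ℤ)+1 by push_cast; ring,
      show ((3*g:ℕ):ℤ) = 3*(g:ℤ) by push_cast; ring, rA g, rB g]
    rw [div_lt_div_iff₀ (by positivity) (by positivity)]
    have hg : (0:ℚ) ≤ (g:ℚ) := Nat.cast_nonneg g
    nlinarith [sq_nonneg (g:ℚ), mul_nonneg hg hg, mul_nonneg (mul_nonneg hg hg) hg,
      mul_nonneg (mul_nonneg (mul_nonneg hg hg) hg) hg]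
  · rw [show ((3*g+1:ℕ):ℤ)+3 = 3*(g:ℤ)+4 by push_cast; ring,
      show ((3*g+1:ℕ):ℤ)+4 = 3*(g:ℤ)+5 by push_cast; ring,
      show ((3*g+1:ℕ):ℤ)+1 = 3*(g:ℤ)+2 by push_cast; ring,
      show ((3*g+1:ℕ):ℤ) = 3*(g:ℤ)+1 by push_cast; ring, rB g, rC g]
    rw [div_lt_div_iff₀ (by positivity) (by positivity)]
    have hg : (0:ℚ) ≤ (g:ℚ) := Nat.cast_nonneg g
    nlinarith [sq_nonneg (g:ℚ), mul_nonneg hg hg, mul_nonneg (mul_nonneg hg hg) hg,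
      mul_nonneg (mul_nonneg (mul_nonneg hg hg) hg) hg]
  · have hA := rA (g+1)
    push_cast at hA
    rw [show ((3*g+2:ℕ):ℤ)+3 = 3*(g:ℤ)+5 by push_cast; ring,
      show ((3*g+2:ℕ):ℤ)+4 = 3*((g:ℤ)+1)+3 by push_cast; ring,
      show ((3*g+2:ℕ):ℤ)+1 = 3*((g:ℤ)+1) by push_cast; ring,
      show ((3*g+2:ℕ):ℤ) = 3*(g:ℤ)+2 by push_cast; ring, rC g, hA]
    rw [div_lt_div_iff₀ (by positivity) (by positivity)]
    have hg : (0:ℚ) ≤ (g:ℚ) := Nat.cast_nonneg g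
    nlinarith [sq_nonneg (g:ℚ), mul_nonneg hg hg, mul_nonneg (mul_nonneg hg hg) hg,
      mul_nonneg (mul_nonneg (mul_nonneg hg hg) hg) hg]
end

section
/- With b_k as defined, the inequality |b_k| ≤ 2|b_{k+1}| holds for all integers k ≥ -1. -/
/-- At `g = 0` truncated subtraction gives `0‼ = 1`, matching the convention `(-1)‼ = 1`. -/
def bScale (g : ℕ) : ℚ :=
  ((6 * g - 1).doubleFactorial : ℚ) / (24 ^ g * g.factorial)

lemma bScale_pos (g : ℕ) : 0 < bScale g := by
  unfold bScale; positivity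

lemma doubleFactorial_six_mul_add_one (g : ℕ) :
    (6 * g + 1).doubleFactorial = (6 * g + 1) * (6 * g - 1).doubleFactorial := by
  cases g with
  | zero => rfl
  | succ g =>
    rw [show 6 * (g + 1) + 1 = 6 * g + 5 + 2 by ring, show 6 * (g + 1) - 1 = 6 * g + 5 by omega,
      Nat.doubleFactorial_add_two]

lemma bScale_succ (g : ℕ) :
    bScale (g + 1) = (6 * g + 5) * (6 * g + 3) * (6 * g + 1) / (24 * (g + 1)) * bScale g := by
  have hdf : (6 * (g + 1) - 1).doubleFactorial
      = (6 * g + 5) * (6 * g + 3) * (6 * g + 1) * (6 * g - 1).doubleFactorial := by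
    rw [show 6 * (g + 1) - 1 = 6 * g + 1 + 2 + 2 by omega, Nat.doubleFactorial_add_two,
      Nat.doubleFactorial_add_two, doubleFactorial_six_mul_add_one]
    ring
  simp only [bScale, hdf, Nat.factorial_succ, pow_succ]
  push_cast
  field_simp

lemma bInt_three_mul (g : ℕ) : bInt (3 * g) = -bScale g := by
  have hmod : (3 * (g : ℤ)) % 3 = 0 := by omega
  have hdiv : (3 * (g : ℤ)) / 3 = g := by omega
  have hdf : (6 * (g : ℤ) - 1).toNat = 6 * g - 1 := by omega
  simp only [bInt, bScale, hmod, if_pos, hdiv, hdf, Int.toNat_natCast, neg_div]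

lemma bInt_three_mul_add_one (g : ℕ) : bInt (3 * g + 1) = (6 * g + 1) / 2 * bScale g := by
  have hmod₀ : ¬ (3 * (g : ℤ) + 1) % 3 = 0 := by omega
  have hmod₂ : ¬ (3 * (g : ℤ) + 1) % 3 = 2 := by omega
  have hdiv : (3 * (g : ℤ) + 1 + 2) / 3 - 1 = g := by omega
  have hdf : (6 * ((3 * (g : ℤ) + 1 + 2) / 3) - 5).toNat = 6 * g + 1 := by omega
  simp only [bInt, bScale, hmod₀, hmod₂, if_neg, not_false_eq_true, hdiv, hdf,
    Int.toNat_natCast, doubleFactorial_six_mul_add_one]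
  push_cast
  ring

lemma bInt_three_mul_sub_one (g : ℕ) :
    bInt (3 * g - 1) = (6 * g + 1) / (6 * g - 1) * bScale g := by
  have hmod₀ : ¬ (3 * (g : ℤ) - 1) % 3 = 0 := by omega
  have hmod₂ : (3 * (g : ℤ) - 1) % 3 = 2 := by omega
  have hdiv : (3 * (g : ℤ) - 1 + 1) / 3 = g := by omega
  have hdf : (6 * (g : ℤ) - 1).toNat = 6 * g - 1 := by omega
  rw [bInt, if_neg hmod₀, if_pos hmod₂, hdiv, hdf, Int.toNat_natCast, Int.cast_natCast, bScale]

lemma abs_bInt_three_mul_le (g : ℕ) : |bInt (3 * g)| ≤ 2 * |bInt (3 * g + 1)| := by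
  have hs := bScale_pos g
  rw [bInt_three_mul, bInt_three_mul_add_one, abs_neg, abs_of_pos hs,
    abs_of_pos (by positivity)]
  nlinarith [(g.cast_nonneg : (0 : ℚ) ≤ g)]

lemma abs_bInt_three_mul_add_one_le (g : ℕ) :
    |bInt (3 * g + 1)| ≤ 2 * |bInt (3 * g + 1 + 1)| := by
  have hs := bScale_pos g
  have hg : (0 : ℚ) ≤ g := g.cast_nonneg
  rw [show 3 * (g : ℤ) + 1 + 1 = 3 * ((g + 1 : ℕ) : ℤ) - 1 by push_cast; ring,
    bInt_three_mul_add_one, bInt_three_mul_sub_one, bScale_succ]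
  push_cast
  have hcoef : (6 * ((g : ℚ) + 1) + 1) / (6 * (g + 1) - 1) *
      ((6 * g + 5) * (6 * g + 3) * (6 * g + 1) / (24 * (g + 1)))
      = (6 * g + 7) * (6 * g + 3) * (6 * g + 1) / (24 * (g + 1)) := by
    rw [show 6 * ((g : ℚ) + 1) - 1 = 6 * g + 5 by ring]
    field_simp
    ring
  rw [abs_of_pos (by positivity), ← mul_assoc, hcoef, abs_of_pos (by positivity), ← mul_assoc]
  refine mul_le_mul_of_nonneg_right ?_ hs.le
  rw [mul_div_assoc', div_le_div_iff₀ (by norm_num) (by positivity)]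
  nlinarith [mul_nonneg hg hg, mul_nonneg (mul_nonneg hg hg) hg]

lemma abs_bInt_three_mul_sub_one_le (g : ℕ) :
    |bInt (3 * g - 1)| ≤ 2 * |bInt (3 * g - 1 + 1)| := by
  have hs := bScale_pos g
  rw [sub_add_cancel, bInt_three_mul, bInt_three_mul_sub_one, abs_neg, abs_mul,
    abs_of_pos hs, abs_div]
  have hcoef : |6 * (g : ℚ) + 1| / |6 * (g : ℚ) - 1| ≤ 2 := by
    rcases Nat.eq_zero_or_pos g with rfl | hg
    · norm_num
    · have hg' : (1 : ℚ) ≤ g := by exact_mod_cast hg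
      rw [abs_of_pos (by positivity), abs_of_pos (by linarith), div_le_iff₀ (by linarith)]
      linarith
  exact mul_le_mul_of_nonneg_right hcoef hs.le

/-- |b_k| ≤ 2|b_{k+1}| for all integers k ≥ -1. -/
theorem stmt7 (k : ℤ) (hk : -1 ≤ k) : |bInt k| ≤ 2 * |bInt (k + 1)| := by
  obtain ⟨g, rfl | rfl | rfl⟩ : ∃ g : ℕ, k = 3 * g ∨ k = 3 * g + 1 ∨ k = 3 * g - 1 :=
    ⟨((k + 1) / 3).toNat, by omega⟩
  · exact abs_bInt_three_mul_le g
  · exact abs_bInt_three_mul_add_one_le g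
  · exact abs_bInt_three_mul_sub_one_le g
end
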